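/- Let L be an ω-Lie algebra over a field K of characteristic ≠ 2, let V be an L-module with action (x,v) ↦ x·v, and let R : L → L be an isometric Rota-Baxter operator of weight 1 on L. Assume that R([R(x),y])·v = 0 for all x,y ∈ L and v ∈ V (i.e. the image of [R(L),L] under R annihilates V). Then the product x∗v := R(x)·v defines an L-module structure on V: [x,y]∗v = x∗(y∗v) − y∗(x∗v) + ω(x,y)·v for all x,y ∈ L and v ∈ V. -/
import Mathlib


/-- If `V` is a module over an ω-Lie algebra `L` and `R` is an isometric
Rota-Baxter operator of weight 1 on `L` such that `R([R(L), L])` annihilates `V`, then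
`x ∗ v := R(x) · v` defines a new `L`-module structure on `V`. -/
theorem isometric_rotaBaxter_gives_module
    {K : Type*} [Field K] (h2 : (2 : K) ≠ 0)
    {L : Type*} [AddCommGroup L] [Module K L]
    (b : L →ₗ[K] L →ₗ[K] L) (ω : L →ₗ[K] L →ₗ[K] K)
    (hskew : ∀ x y : L, b x y = - b y x)
    (hωskew : ∀ x y : L, ω x y = - ω y x)
    (hjac : ∀ x y z : L, b (b x y) z + b (b y z) x + b (b z x) y
      = ω x y • z + ω y z • x + ω z x • y)
    {V : Type*} [AddCommGroup V] [Module K V]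
    (ρ : L →ₗ[K] V →ₗ[K] V)
    (hmod : ∀ x y : L, ∀ v : V, ρ (b x y) v = ρ x (ρ y v) - ρ y (ρ x v) + ω x y • v)
    (R : L →ₗ[K] L)
    (hRB : ∀ x y : L, b (R x) (R y) = R (b (R x) y + b x (R y) + b x y))
    (hisom : ∀ x y : L, ω (R x) (R y) = ω x y)
    (hann : ∀ x y : L, ∀ v : V, ρ (R (b (R x) y)) v = 0) :
    ∀ x y : L, ∀ v : V,
      ρ (R (b x y)) v = ρ (R x) (ρ (R y) v) - ρ (R y) (ρ (R x) v) + ω x y • v := by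
  intro x y v
  have h2 : ρ (R (b x (R y))) v = 0 := by
    rw [hskew x (R y), map_neg, map_neg]
    simp [hann]
  have hm := hmod (R x) (R y) v
  rw [hRB x y] at hm
  simp only [map_add] at hm
  simpa [hann, h2, hisom] using hm
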